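/- arXiv:2309.07821 — 2 statements merged into one kernel-verified Lean document; each statement's English description precedes it below -/
import Mathlib

section
/- Let 1 ≤ p ≤ ∞, 1/p + 1/q = 1 + 1/r with q,r ∈ [1,∞], and let ψ:(0,∞)→(0,∞) satisfy ψ(t) = o(t^{-(1-1/q)/2}) as t → 0⁺. Then there exists G ∈ L^p(ℝ) such that ‖G ∗ Θ_t‖_r / ψ(t) is unbounded as t → 0⁺. -/
/-!
The uniform boundedness argument is replaced by an explicit gliding hump. Choose times
`T n → 0⁺` with `ψ(T n) · T n ^ ((1/p - 1/r)/2) < 4⁻ⁿ` (Young's relation turns the exponent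
`(1 - 1/q)/2` into `(1/p - 1/r)/2`) and put `G = ∑ 2⁻ⁿ T n ^ ((1 - 1/p)/2) Θ_{T n}`.
Interpolating between `‖Θ_t‖₁ = 1` and `‖Θ_t‖_∞ ≤ t^(-1/2)` gives `‖Θ_t‖_e ≤ t^((1/e - 1)/2)`,
so every hump has `L^p`-norm at most `2⁻ⁿ` and `G ∈ L^p`. Conversely `G` dominates its `n`-th
hump, and `Θ_t ∗ Θ_t ≳ t^(-1/2)` on `[0, √t]`, so `‖G ∗ Θ_{T n}‖_r ≳ 2⁻ⁿ T n ^ ((1/r - 1/p)/2)`,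
which is at least a constant times `2ⁿ ψ(T n)`.
-/

open MeasureTheory Real ENNReal Filter

/-- The Gauss–Weierstrass heat kernel on ℝ. -/
noncomputable def heatKernel (t x : ℝ) : ℝ :=
  Real.exp (-x ^ 2 / (4 * t)) / (2 * Real.sqrt (Real.pi * t))

open Topology Set

theorem ENNReal.toReal_inv_le_one {e : ℝ≥0∞} (he : 1 ≤ e) : e.toReal⁻¹ ≤ 1 := by
  rw [← ENNReal.toReal_inv]
  exact ENNReal.toReal_le_of_le_ofReal zero_le_one (by simpa using ENNReal.inv_le_one.2 he)

theorem ENNReal.toReal_inv_add_toReal_inv {p q r : ℝ≥0∞} (hp : 1 ≤ p) (hq : 1 ≤ q) (hr : 1 ≤ r)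
    (hpqr : 1 / p + 1 / q = 1 + 1 / r) : p.toReal⁻¹ + q.toReal⁻¹ = 1 + r.toReal⁻¹ := by
  have hne : ∀ {e : ℝ≥0∞}, 1 ≤ e → e⁻¹ ≠ ∞ := fun he =>
    ENNReal.inv_ne_top.2 (zero_lt_one.trans_le he).ne'
  simp only [one_div] at hpqr
  rw [← ENNReal.toReal_inv, ← ENNReal.toReal_inv, ← ENNReal.toReal_inv, ← ENNReal.toReal_add
    (hne hp) (hne hq), hpqr, ENNReal.toReal_add ENNReal.one_ne_top (hne hr), ENNReal.toReal_one]

theorem exists_seq_tendsto_nhdsGT_zero_forall_lt {g : ℝ → ℝ} (hg : Tendsto g (𝓝[>] 0) (𝓝 0))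
    {ε : ℕ → ℝ} (hε : ∀ n, 0 < ε n) :
    ∃ T : ℕ → ℝ, Tendsto T atTop (𝓝[>] 0) ∧ ∀ n, T n ∈ Ioc 0 1 ∧ g (T n) < ε n := by
  obtain ⟨x, hx⟩ := exists_seq_tendsto (𝓝[>] (0 : ℝ))
  have hIoc : ∀ᶠ t in 𝓝[>] (0 : ℝ), t ∈ Ioc 0 1 := Ioc_mem_nhdsGT one_pos
  obtain ⟨φ, hφ, hxφ⟩ := extraction_forall_of_eventually
    (P := fun n k => x k ∈ Ioc 0 1 ∧ g (x k) < ε n) fun n =>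
      hx.eventually (hIoc.and (hg.eventually_lt_const (hε n)))
  exact ⟨x ∘ φ, hx.comp hφ.tendsto_atTop, hxφ⟩

theorem Real.le_mul_rpow_neg_of_mul_rpow_le {x t ε α : ℝ} (ht : 0 < t) (h : x * t ^ α ≤ ε) :
    x ≤ ε * t ^ (-α) := by
  rw [Real.rpow_neg ht.le, ← div_eq_mul_inv, le_div_iff₀ (Real.rpow_pos_of_pos ht α)]
  exact h

namespace MeasureTheory

variable {α E : Type*} [MeasurableSpace α] {μ : Measure α} [NormedAddCommGroup E] {e : ℝ≥0∞}

/-- For `e = ∞` the junk value `(∞ : ℝ≥0∞).toReal⁻¹ = 0` turns this into the trivial bound. -/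
theorem eLpNorm_le_eLpNorm_top_rpow_mul_eLpNorm_one_rpow {f : α → E}
    (hf : AEStronglyMeasurable f μ) (he : 1 ≤ e) :
    eLpNorm f e μ ≤ eLpNorm f ∞ μ ^ (1 - e.toReal⁻¹) * eLpNorm f 1 μ ^ e.toReal⁻¹ := by
  obtain rfl | he_top := eq_or_ne e ∞
  · simp
  have hs : 1 ≤ e.toReal := by simpa using ENNReal.toReal_mono he_top he
  set s := e.toReal
  have hpow : ∀ᵐ x ∂μ, ‖f x‖ₑ ^ s ≤ eLpNorm f ∞ μ ^ (s - 1) * ‖f x‖ₑ := by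
    filter_upwards [enorm_ae_le_eLpNormEssSup f μ] with x hx
    calc ‖f x‖ₑ ^ s = ‖f x‖ₑ ^ (s - 1) * ‖f x‖ₑ ^ (1 : ℝ) := by
          rw [← ENNReal.rpow_add_of_nonneg _ _ (by linarith) zero_le_one, sub_add_cancel]
      _ ≤ eLpNorm f ∞ μ ^ (s - 1) * ‖f x‖ₑ := by
          rw [eLpNorm_exponent_top, ENNReal.rpow_one]; gcongr
  calc eLpNorm f e μ = (∫⁻ x, ‖f x‖ₑ ^ s ∂μ) ^ (1 / s) :=
        eLpNorm_eq_lintegral_rpow_enorm_toReal (zero_lt_one.trans_le he).ne' he_top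
    _ ≤ (eLpNorm f ∞ μ ^ (s - 1) * eLpNorm f 1 μ) ^ (1 / s) := by
        rw [eLpNorm_one_eq_lintegral_enorm, ← lintegral_const_mul'' _ hf.enorm]
        gcongr ?_ ^ _
        exact lintegral_mono_ae hpow
    _ = _ := by
        rw [ENNReal.mul_rpow_of_nonneg _ _ (by positivity), ← ENNReal.rpow_mul]
        congr 2 <;> field_simp

theorem eLpNorm_lt_top_of_integrable_of_bound {f : α → E} (hf : Integrable f μ) {C : ℝ}
    (hC : ∀ᵐ x ∂μ, ‖f x‖ ≤ C) (he : 1 ≤ e) : eLpNorm f e μ < ∞ := by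
  refine (eLpNorm_le_eLpNorm_top_rpow_mul_eLpNorm_one_rpow hf.1 he).trans_lt ?_
  have htop : eLpNorm f ∞ μ < ∞ := (memLp_top_of_bound hf.1 C hC).2
  have hone : eLpNorm f 1 μ < ∞ := (memLp_one_iff_integrable.2 hf).2
  have hs := ENNReal.toReal_inv_le_one he
  exact ENNReal.mul_lt_top (ENNReal.rpow_lt_top_of_nonneg (by linarith) htop.ne)
    (ENNReal.rpow_lt_top_of_nonneg (by positivity) hone.ne)

theorem mul_measure_rpow_le_eLpNorm {f : α → E} {s : Set α} (hs : MeasurableSet s)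
    (hμs : μ s ≠ 0) (he : e ≠ 0) {c : ℝ≥0∞} (hc : ∀ x ∈ s, c ≤ ‖f x‖ₑ) :
    c * μ s ^ e.toReal⁻¹ ≤ eLpNorm f e μ := by
  calc c * μ s ^ e.toReal⁻¹ = eLpNorm (s.indicator fun _ => c) e μ := by
        rw [eLpNorm_indicator_const' hs hμs he, enorm_eq_self, one_div]
    _ ≤ eLpNorm f e μ := by
        refine eLpNorm_mono_enorm fun x => ?_
        by_cases hx : x ∈ s
        · simpa [hx] using hc x hx
        · simp [hx]

theorem eLpNorm_tsum_le {f : ℕ → α → E} (hf : ∀ n, AEStronglyMeasurable (f n) μ)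
    (hsum : ∀ᵐ x ∂μ, Summable fun n => f n x) (he : 1 ≤ e) :
    eLpNorm (fun x => ∑' n, f n x) e μ ≤ ∑' n, eLpNorm (f n) e μ := by
  have hlim : ∀ᵐ x ∂μ, Tendsto (fun N => (∑ n ∈ Finset.range N, f n) x) atTop
      (𝓝 (∑' n, f n x)) :=
    hsum.mono fun x hx => by simpa only [Finset.sum_apply] using hx.hasSum.tendsto_sum_nat
  have hpartial : ∀ N, eLpNorm (∑ n ∈ Finset.range N, f n) e μ ≤ ∑' n, eLpNorm (f n) e μ :=
    fun N => (eLpNorm_sum_le (fun n _ => hf n) he).trans (ENNReal.sum_le_tsum _)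
  calc eLpNorm (fun x => ∑' n, f n x) e μ
      ≤ atTop.liminf fun N => eLpNorm (∑ n ∈ Finset.range N, f n) e μ :=
        Lp.eLpNorm_lim_le_liminf_eLpNorm
          (fun N => Finset.aestronglyMeasurable_sum _ fun n _ => hf n) _ hlim
    _ ≤ ∑' n, eLpNorm (f n) e μ := liminf_le_of_frequently_le' (Frequently.of_forall hpartial)

theorem aestronglyMeasurable_tsum {f : ℕ → α → E} (hf : ∀ n, AEStronglyMeasurable (f n) μ)
    (hsum : ∀ᵐ x ∂μ, Summable fun n => f n x) :
    AEStronglyMeasurable (fun x => ∑' n, f n x) μ :=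
  aestronglyMeasurable_of_tendsto_ae atTop
    (fun N => Finset.aestronglyMeasurable_sum _ fun n _ => hf n)
    (hsum.mono fun x hx => by simpa only [Finset.sum_apply] using hx.hasSum.tendsto_sum_nat)

end MeasureTheory

section HeatKernel

variable {t : ℝ}

theorem heatKernel_nonneg (t x : ℝ) : 0 ≤ heatKernel t x := by
  unfold heatKernel
  positivity

theorem continuous_heatKernel (t : ℝ) : Continuous (heatKernel t) := by
  unfold heatKernel
  fun_prop

theorem heatKernel_eq_gaussian (t : ℝ) :
    heatKernel t = fun x => Real.exp (-(1 / (4 * t)) * x ^ 2) / (2 * √(π * t)) := by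
  ext x
  rw [heatKernel, neg_mul, one_div_mul_eq_div, neg_div]

theorem integrable_heatKernel (ht : 0 < t) : Integrable (heatKernel t) := by
  rw [heatKernel_eq_gaussian]
  exact (integrable_exp_neg_mul_sq (by positivity)).div_const _

theorem integral_heatKernel (ht : 0 < t) : ∫ x, heatKernel t x = 1 := by
  have hsqrt : √(π / (1 / (4 * t))) = 2 * √(π * t) := by
    rw [div_div_eq_mul_div, div_one, show π * (4 * t) = 2 ^ 2 * (π * t) by ring,
      Real.sqrt_mul' _ (by positivity), Real.sqrt_sq zero_le_two]
  rw [heatKernel_eq_gaussian, integral_div, integral_gaussian, hsqrt, div_self (by positivity)]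

theorem heatKernel_eq_div_sqrt (t x : ℝ) :
    heatKernel t x = Real.exp (-x ^ 2 / (4 * t)) / (2 * √π) / √t := by
  rw [heatKernel, Real.sqrt_mul Real.pi_pos.le, div_div, mul_assoc]

theorem one_le_sqrt_pi : 1 ≤ √π := Real.one_le_sqrt.2 (by linarith [Real.pi_gt_three])

theorem heatKernel_le_inv_sqrt (ht : 0 < t) (x : ℝ) : heatKernel t x ≤ (√t)⁻¹ := by
  have hexp : Real.exp (-x ^ 2 / (4 * t)) ≤ 1 :=
    Real.exp_le_one_iff.2 (div_nonpos_of_nonpos_of_nonneg (by nlinarith) (by positivity))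
  rw [heatKernel_eq_div_sqrt, ← one_div]
  gcongr
  exact (div_le_one (by positivity)).2 (by linarith [one_le_sqrt_pi])

theorem heatKernel_le_two_div_sq (ht : 0 < t) (ht1 : t ≤ 1) {x : ℝ} (hx : x ≠ 0) :
    heatKernel t x ≤ 2 / x ^ 2 := by
  have hexp : Real.exp (-x ^ 2 / (4 * t)) ≤ 4 * t / x ^ 2 := by
    have hu : 0 < x ^ 2 / (4 * t) := by positivity
    rw [neg_div, Real.exp_neg, ← inv_div (x ^ 2)]
    exact inv_anti₀ hu ((le_add_of_nonneg_right zero_le_one).trans (Real.add_one_le_exp _))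
  have hsqrt : √t ≤ 1 := Real.sqrt_le_one.2 ht1
  calc heatKernel t x ≤ 4 * t / x ^ 2 / (2 * √π) / √t := by
        rw [heatKernel_eq_div_sqrt]; gcongr
    _ = 2 * √t / (√π * x ^ 2) := by
        field_simp
        rw [Real.sq_sqrt ht.le]
        ring
    _ ≤ 2 / x ^ 2 := by
        rw [div_le_div_iff₀ (by positivity) (by positivity)]
        nlinarith [mul_le_mul_of_nonneg_right (hsqrt.trans one_le_sqrt_pi) (sq_nonneg x)]

theorem div_sqrt_le_heatKernel (ht : 0 < t) {x : ℝ} (hx : |x| ≤ √t) :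
    Real.exp (-1) / (2 * √π) / √t ≤ heatKernel t x := by
  have hx2 : x ^ 2 ≤ t := by
    simpa [Real.sq_sqrt ht.le] using pow_le_pow_left₀ (abs_nonneg x) hx 2
  rw [heatKernel_eq_div_sqrt]
  gcongr
  rw [neg_div, neg_le_neg_iff, div_le_one (by positivity)]
  linarith

theorem eLpNorm_heatKernel_le (ht : 0 < t) {e : ℝ≥0∞} (he : 1 ≤ e) :
    eLpNorm (heatKernel t) e ≤ ENNReal.ofReal (t ^ ((e.toReal⁻¹ - 1) / 2)) := by
  have htop : eLpNorm (heatKernel t) ∞ ≤ ENNReal.ofReal (√t)⁻¹ := by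
    rw [eLpNorm_exponent_top]
    refine eLpNormEssSup_le_of_ae_bound (Eventually.of_forall fun x => ?_)
    rw [Real.norm_of_nonneg (heatKernel_nonneg t x)]
    exact heatKernel_le_inv_sqrt ht x
  have hone : eLpNorm (heatKernel t) 1 = 1 := by
    simp_rw [eLpNorm_one_eq_lintegral_enorm, Real.enorm_of_nonneg (heatKernel_nonneg t _)]
    rw [← ofReal_integral_eq_lintegral_ofReal (integrable_heatKernel ht)
      (Eventually.of_forall (heatKernel_nonneg t)), integral_heatKernel ht, ENNReal.ofReal_one]
  have hexp : ((√t)⁻¹) ^ (1 - e.toReal⁻¹) = t ^ ((e.toReal⁻¹ - 1) / 2) := by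
    rw [Real.sqrt_eq_rpow, ← Real.rpow_neg ht.le, ← Real.rpow_mul ht.le]
    congr 1
    ring
  have hθ := ENNReal.toReal_inv_le_one he
  calc eLpNorm (heatKernel t) e volume
      ≤ eLpNorm (heatKernel t) ∞ volume ^ (1 - e.toReal⁻¹) *
          eLpNorm (heatKernel t) 1 volume ^ e.toReal⁻¹ :=
        eLpNorm_le_eLpNorm_top_rpow_mul_eLpNorm_one_rpow
          (continuous_heatKernel t).aestronglyMeasurable he
    _ ≤ ENNReal.ofReal (√t)⁻¹ ^ (1 - e.toReal⁻¹) := by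
        rw [hone, ENNReal.one_rpow, mul_one]
        exact ENNReal.rpow_le_rpow htop (by linarith)
    _ = ENNReal.ofReal (t ^ ((e.toReal⁻¹ - 1) / 2)) := by
        rw [ENNReal.ofReal_rpow_of_nonneg (by positivity) (by linarith), hexp]

end HeatKernel

noncomputable def heatConv (t : ℝ) (f : ℝ → ℝ) (x : ℝ) : ℝ :=
  ∫ y, f y * heatKernel t (x - y)

section HeatConv

variable {t : ℝ} {f : ℝ → ℝ}

theorem heatConv_eq_convolution (t : ℝ) (f : ℝ → ℝ) :
    heatConv t f = MeasureTheory.convolution f (heatKernel t) (ContinuousLinearMap.mul ℝ ℝ) := by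
  ext x
  simp [heatConv, MeasureTheory.convolution]

theorem integrable_mul_heatKernel_sub (hf : Integrable f) (ht : 0 < t) (x : ℝ) :
    Integrable fun y => f y * heatKernel t (x - y) :=
  hf.mul_bdd ((continuous_heatKernel t).comp (continuous_sub_left x)).aestronglyMeasurable
    (Eventually.of_forall fun y => by
      rw [Real.norm_of_nonneg (heatKernel_nonneg t _)]
      exact heatKernel_le_inv_sqrt ht _)

theorem eLpNorm_heatConv_lt_top (hf : Integrable f) (ht : 0 < t) {e : ℝ≥0∞} (he : 1 ≤ e) :
    eLpNorm (heatConv t f) e < ∞ := by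
  refine eLpNorm_lt_top_of_integrable_of_bound ?_ (C := (√t)⁻¹ * ∫ y, ‖f y‖)
    (Eventually.of_forall fun x => ?_) he
  · rw [heatConv_eq_convolution]
    exact hf.integrable_convolution _ (integrable_heatKernel ht)
  · rw [heatConv, ← integral_const_mul]
    refine norm_integral_le_of_norm_le (hf.norm.const_mul _) (Eventually.of_forall fun y => ?_)
    rw [norm_mul, Real.norm_of_nonneg (heatKernel_nonneg t _), mul_comm]
    gcongr
    exact heatKernel_le_inv_sqrt ht _

theorem heatConv_heatKernel_ge (ht : 0 < t) {x : ℝ} (hx : x ∈ Icc 0 √t) :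
    (Real.exp (-1) / (2 * √π)) ^ 2 / √t ≤ heatConv t (heatKernel t) x := by
  set c := Real.exp (-1) / (2 * √π)
  have hst : 0 < √t := Real.sqrt_pos.2 ht
  have hbound : ∀ y ∈ Icc 0 √t, (c / √t) ^ 2 ≤ heatKernel t y * heatKernel t (x - y) := by
    intro y hy
    rw [sq]
    have habs : ∀ z ∈ Icc (-√t) √t, c / √t ≤ heatKernel t z := fun z hz =>
      div_sqrt_le_heatKernel ht (abs_le.2 hz)
    exact mul_le_mul (habs y ⟨by linarith [hy.1], hy.2⟩)
      (habs (x - y) ⟨by linarith [hx.1, hy.2], by linarith [hx.2, hy.1]⟩)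
      (by positivity) (heatKernel_nonneg t y)
  have hint := integrable_mul_heatKernel_sub (integrable_heatKernel ht) ht x
  calc c ^ 2 / √t = ∫ _ in Icc 0 √t, (c / √t) ^ 2 := by
        rw [setIntegral_const, Real.volume_real_Icc_of_le hst.le, sub_zero, smul_eq_mul]
        field_simp
    _ ≤ ∫ y in Icc 0 √t, heatKernel t y * heatKernel t (x - y) :=
        setIntegral_mono_on (integrableOn_const (by simp)) hint.integrableOn measurableSet_Icc
          hbound
    _ ≤ heatConv t (heatKernel t) x :=
        setIntegral_le_integral hint (Eventually.of_forall fun y =>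
          mul_nonneg (heatKernel_nonneg t _) (heatKernel_nonneg t _))

theorem heatConv_ge_of_ae_le (hf : Integrable f) (ht : 0 < t) {b : ℝ} (hb : 0 ≤ b)
    (hbf : ∀ᵐ y, b * heatKernel t y ≤ f y) {x : ℝ} (hx : x ∈ Icc 0 √t) :
    b * ((Real.exp (-1) / (2 * √π)) ^ 2 / √t) ≤ heatConv t f x := by
  calc b * ((Real.exp (-1) / (2 * √π)) ^ 2 / √t) ≤ b * heatConv t (heatKernel t) x := by
        gcongr; exact heatConv_heatKernel_ge ht hx
    _ = ∫ y, b * heatKernel t y * heatKernel t (x - y) := by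
        rw [heatConv, ← integral_const_mul]; simp only [mul_assoc]
    _ ≤ heatConv t f x :=
        integral_mono_ae
          (integrable_mul_heatKernel_sub ((integrable_heatKernel ht).const_mul b) ht x)
          (integrable_mul_heatKernel_sub hf ht x)
          (hbf.mono fun y hy => mul_le_mul_of_nonneg_right hy (heatKernel_nonneg t _))

theorem eLpNorm_heatConv_ge_of_ae_le (hf : Integrable f) (ht : 0 < t) {b : ℝ} (hb : 0 ≤ b)
    (hbf : ∀ᵐ y, b * heatKernel t y ≤ f y) {e : ℝ≥0∞} (he : e ≠ 0) :
    ENNReal.ofReal (b * (Real.exp (-1) / (2 * √π)) ^ 2 * t ^ ((e.toReal⁻¹ - 1) / 2)) ≤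
      eLpNorm (heatConv t f) e volume := by
  set c := Real.exp (-1) / (2 * √π)
  have hst : 0 < √t := Real.sqrt_pos.2 ht
  have hvol : volume (Icc 0 √t) = ENNReal.ofReal √t := by rw [Real.volume_Icc, sub_zero]
  have hpow : b * (c ^ 2 / √t) * √t ^ e.toReal⁻¹ = b * c ^ 2 * t ^ ((e.toReal⁻¹ - 1) / 2) := by
    rw [Real.sqrt_eq_rpow, ← Real.rpow_mul ht.le, div_eq_mul_inv, ← Real.rpow_neg ht.le,
      mul_assoc, mul_assoc, mul_assoc, ← Real.rpow_add ht]
    congr 3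
    ring
  calc ENNReal.ofReal (b * c ^ 2 * t ^ ((e.toReal⁻¹ - 1) / 2))
      = ENNReal.ofReal (b * (c ^ 2 / √t)) * volume (Icc 0 √t) ^ e.toReal⁻¹ := by
        rw [hvol, ENNReal.ofReal_rpow_of_nonneg hst.le (by positivity), ← ENNReal.ofReal_mul
          (by positivity), hpow]
    _ ≤ eLpNorm (heatConv t f) e volume :=
        mul_measure_rpow_le_eLpNorm measurableSet_Icc (by simp [hvol, hst]) he fun x hx =>
          (ENNReal.ofReal_le_ofReal (heatConv_ge_of_ae_le hf ht hb hbf hx)).trans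
            (Real.ofReal_le_enorm _)

end HeatConv

noncomputable def scaledHeatKernel (a t x : ℝ) : ℝ :=
  t ^ ((1 - a) / 2) * heatKernel t x

noncomputable def heatHumpSeries (a : ℝ) (T : ℕ → ℝ) (x : ℝ) : ℝ :=
  ∑' n, (2⁻¹ : ℝ) ^ n * scaledHeatKernel a (T n) x

section HeatHumpSeries

variable {a : ℝ} {T : ℕ → ℝ} {e : ℝ≥0∞}

theorem eLpNorm_scaledHeatKernel_le {t : ℝ} (ht : t ∈ Ioc 0 1) (he : 1 ≤ e)
    (hae : a ≤ e.toReal⁻¹) : eLpNorm (scaledHeatKernel a t) e ≤ 1 := by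
  have hsmul : scaledHeatKernel a t = t ^ ((1 - a) / 2) • heatKernel t := rfl
  rw [hsmul, eLpNorm_const_smul, Real.enorm_of_nonneg (by positivity [ht.1])]
  calc ENNReal.ofReal (t ^ ((1 - a) / 2)) * eLpNorm (heatKernel t) e volume
      ≤ ENNReal.ofReal (t ^ ((1 - a) / 2)) * ENNReal.ofReal (t ^ ((e.toReal⁻¹ - 1) / 2)) := by
        gcongr; exact eLpNorm_heatKernel_le ht.1 he
    _ = ENNReal.ofReal (t ^ ((e.toReal⁻¹ - a) / 2)) := by
        rw [← ENNReal.ofReal_mul (by positivity [ht.1]), ← Real.rpow_add ht.1]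
        congr 2; ring
    _ ≤ 1 := ENNReal.ofReal_le_one.2 (Real.rpow_le_one ht.1.le ht.2 (by linarith))

theorem summable_heatHumpSeries (hT : ∀ n, T n ∈ Ioc 0 1) (ha : a ≤ 1) {x : ℝ} (hx : x ≠ 0) :
    Summable fun n => (2⁻¹ : ℝ) ^ n * scaledHeatKernel a (T n) x := by
  refine Summable.of_nonneg_of_le (fun n => ?_) (fun n => ?_)
    (summable_geometric_two.mul_right (2 / x ^ 2))
  · exact mul_nonneg (by positivity) (mul_nonneg (by positivity [(hT n).1]) (heatKernel_nonneg _ _))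
  · have hpow : T n ^ ((1 - a) / 2) ≤ 1 := Real.rpow_le_one (hT n).1.le (hT n).2 (by linarith)
    rw [one_div, inv_pow]
    gcongr
    calc scaledHeatKernel a (T n) x ≤ 1 * heatKernel (T n) x :=
          mul_le_mul_of_nonneg_right hpow (heatKernel_nonneg _ _)
      _ ≤ 2 / x ^ 2 := by rw [one_mul]; exact heatKernel_le_two_div_sq (hT n).1 (hT n).2 hx

theorem memLp_heatHumpSeries (hT : ∀ n, T n ∈ Ioc 0 1) (ha : a ≤ 1) (he : 1 ≤ e)
    (hae : a ≤ e.toReal⁻¹) : MemLp (heatHumpSeries a T) e := by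
  have hmeas : ∀ n, AEStronglyMeasurable (fun x => (2⁻¹ : ℝ) ^ n * scaledHeatKernel a (T n) x) :=
    fun n => (continuous_const.mul (continuous_const.mul (continuous_heatKernel _)))
      |>.aestronglyMeasurable
  have hsum := (Measure.ae_ne volume 0).mono fun x hx => summable_heatHumpSeries hT ha hx
  refine ⟨aestronglyMeasurable_tsum hmeas hsum, (eLpNorm_tsum_le hmeas hsum he).trans_lt ?_⟩
  calc ∑' n, eLpNorm (fun x => (2⁻¹ : ℝ) ^ n * scaledHeatKernel a (T n) x) e volume
      ≤ ∑' n : ℕ, (2⁻¹ : ℝ≥0∞) ^ n := by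
        refine ENNReal.tsum_le_tsum fun n => ?_
        have hsmul : (fun x => (2⁻¹ : ℝ) ^ n * scaledHeatKernel a (T n) x) =
            (2⁻¹ : ℝ) ^ n • scaledHeatKernel a (T n) := rfl
        have hcoef : ‖(2⁻¹ : ℝ) ^ n‖ₑ = (2⁻¹ : ℝ≥0∞) ^ n := by
          rw [Real.enorm_of_nonneg (by positivity), ENNReal.ofReal_pow (by norm_num),
            ENNReal.ofReal_inv_of_pos two_pos, ENNReal.ofReal_ofNat]
        rw [hsmul, eLpNorm_const_smul, hcoef]
        exact mul_le_of_le_one_right' (eLpNorm_scaledHeatKernel_le (hT n) he hae)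
    _ < ∞ := by simp [ENNReal.tsum_geometric, ENNReal.one_sub_inv_two]

theorem heatHumpSeries_ae_ge (hT : ∀ n, T n ∈ Ioc 0 1) (ha : a ≤ 1) (n : ℕ) :
    ∀ᵐ x, (2⁻¹ : ℝ) ^ n * T n ^ ((1 - a) / 2) * heatKernel (T n) x ≤ heatHumpSeries a T x := by
  filter_upwards [Measure.ae_ne volume 0] with x hx
  rw [mul_assoc]
  exact (summable_heatHumpSeries hT ha hx).le_tsum n fun m _ =>
    mul_nonneg (by positivity) (mul_nonneg (by positivity [(hT m).1]) (heatKernel_nonneg _ _))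

theorem toReal_eLpNorm_heatConv_heatHumpSeries_ge (hT : ∀ n, T n ∈ Ioc 0 1) (ha : a ≤ 1)
    {r : ℝ≥0∞} (hr : 1 ≤ r) (n : ℕ) :
    (Real.exp (-1) / (2 * √π)) ^ 2 * 2⁻¹ ^ n * T n ^ ((r.toReal⁻¹ - a) / 2) ≤
      (eLpNorm (heatConv (T n) (heatHumpSeries a T)) r).toReal := by
  have ht := (hT n).1
  have hint : Integrable (heatHumpSeries a T) :=
    memLp_one_iff_integrable.1 (memLp_heatHumpSeries hT ha le_rfl (by simpa using ha))
  have hlow := eLpNorm_heatConv_ge_of_ae_le hint ht (by positivity)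
    (heatHumpSeries_ae_ge hT ha n) (zero_lt_one.trans_le hr).ne'
  have hpow : T n ^ ((1 - a) / 2) * T n ^ ((r.toReal⁻¹ - 1) / 2) =
      T n ^ ((r.toReal⁻¹ - a) / 2) := by
    rw [← Real.rpow_add ht]; congr 1; ring
  calc (Real.exp (-1) / (2 * √π)) ^ 2 * 2⁻¹ ^ n * T n ^ ((r.toReal⁻¹ - a) / 2)
      = (ENNReal.ofReal (2⁻¹ ^ n * T n ^ ((1 - a) / 2) * (Real.exp (-1) / (2 * √π)) ^ 2 *
          T n ^ ((r.toReal⁻¹ - 1) / 2))).toReal := by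
        rw [ENNReal.toReal_ofReal (by positivity), ← hpow]; ring
    _ ≤ _ := ENNReal.toReal_mono (eLpNorm_heatConv_lt_top hint ht hr).ne hlow

theorem mul_two_pow_le_toReal_eLpNorm_heatConv_heatHumpSeries_div (hT : ∀ n, T n ∈ Ioc 0 1)
    (ha : a ≤ 1) {r : ℝ≥0∞} (hr : 1 ≤ r) {n : ℕ} {ψ : ℝ} (hψ : 0 < ψ)
    (hψT : ψ * T n ^ ((a - r.toReal⁻¹) / 2) ≤ 4⁻¹ ^ n) :
    (Real.exp (-1) / (2 * √π)) ^ 2 * 2 ^ n ≤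
      (eLpNorm (heatConv (T n) (heatHumpSeries a T)) r).toReal / ψ := by
  set c := (Real.exp (-1) / (2 * √π)) ^ 2
  have hψ' := Real.le_mul_rpow_neg_of_mul_rpow_le (hT n).1 hψT
  rw [le_div_iff₀ hψ]
  calc c * 2 ^ n * ψ ≤ c * 2 ^ n * (4⁻¹ ^ n * T n ^ (-((a - r.toReal⁻¹) / 2))) := by gcongr
    _ = c * 2⁻¹ ^ n * T n ^ ((r.toReal⁻¹ - a) / 2) := by
        rw [← mul_assoc, mul_assoc c, ← mul_pow, ← neg_div, neg_sub]; norm_num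
    _ ≤ _ := toReal_eLpNorm_heatConv_heatHumpSeries_ge hT ha hr n

end HeatHumpSeries

/-- Sharpness of the growth estimate `‖F ∗ Θ_t‖_r = O(t^{-(1-1/q)/2})` as `t → 0⁺`:
if `ψ : (0,∞) → (0,∞)` with `ψ(t) = o(t^{-(1-1/q)/2})` as `t → 0⁺`, then there is
`G ∈ L^p` such that `‖G ∗ Θ_t‖_r / ψ(t)` is unbounded as `t → 0⁺`. -/
theorem heat_estimate_sharp (p q r : ℝ≥0∞)
    (hp : 1 ≤ p) (hq : 1 ≤ q) (hr : 1 ≤ r)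
    (hpqr : 1 / p + 1 / q = 1 + 1 / r)
    (ψ : ℝ → ℝ) (hψpos : ∀ t > (0:ℝ), 0 < ψ t)
    (hψo : Tendsto (fun t : ℝ => ψ t * t ^ ((1 - 1 / q.toReal) / 2))
      (nhdsWithin 0 (Set.Ioi 0)) (nhds 0)) :
    ∃ G : ℝ → ℝ, MemLp G p (volume : Measure ℝ) ∧
      ∀ M : ℝ, ∃ᶠ t in nhdsWithin (0:ℝ) (Set.Ioi 0),
        M < (eLpNorm (fun x => ∫ y : ℝ, G y * heatKernel t (x - y)) r volume).toReal
              / ψ t := by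
  set P := p.toReal⁻¹
  set R := r.toReal⁻¹
  have hP : P ≤ 1 := ENNReal.toReal_inv_le_one hp
  have hexp : (1 - 1 / q.toReal) / 2 = (P - R) / 2 := by
    linarith [one_div q.toReal, ENNReal.toReal_inv_add_toReal_inv hp hq hr hpqr]
  rw [hexp] at hψo
  obtain ⟨T, hT0, hT⟩ :=
    exists_seq_tendsto_nhdsGT_zero_forall_lt hψo (ε := fun n => 4⁻¹ ^ n) fun n => by positivity
  refine ⟨heatHumpSeries P T, memLp_heatHumpSeries (fun n => (hT n).1) hP hp le_rfl,
    fun M => hT0.frequently ?_⟩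
  have hlim : Tendsto (fun n : ℕ => (Real.exp (-1) / (2 * √π)) ^ 2 * (2 : ℝ) ^ n) atTop atTop :=
    (tendsto_pow_atTop_atTop_of_one_lt (one_lt_two : (1 : ℝ) < 2)).const_mul_atTop (by positivity)
  refine ((hlim.eventually_gt_atTop M).mono fun n hn => hn.trans_le ?_).frequently
  exact mul_two_pow_le_toReal_eLpNorm_heatConv_heatHumpSeries_div (fun n => (hT n).1) hP hr
    (hψpos _ (hT n).1.1) (hT n).2.le
end

section
/- Let 1 ≤ p ≤ ∞ with conjugate q, F ∈ L^p(ℝ), and let ψ be absolutely continuous and differentiable with ψ ∈ L^q, ψ' ∈ L^q, and ψ' bounded on each compact interval. Then (F ∗ ψ)'(x) = (F ∗ ψ')(x) for every x ∈ ℝ. -/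
/-!
Writing `ψ (x - y) - ψ (x₀ - y) = ∫ s in x₀..x, ψ' (s - y)` and exchanging the integrals gives
`(F ∗ ψ) x - (F ∗ ψ) x₀ = ∫ s in x₀..x, (F ∗ ψ') s`. The convolution of an `L^p` function with an
`L^q` function is continuous, since translation is continuous in `L^r` for `r < ∞` and one of
`p`, `q` is finite; applied to `|F| ∗ |ψ'|` this also justifies Fubini on `[x₀, x] × ℝ`.
The fundamental theorem of calculus then gives `(F ∗ ψ)' = F ∗ ψ'`.
-/

open MeasureTheory Real ENNReal

section

variable {p q : ℝ≥0∞} [p.HolderConjugate q] {f g : ℝ → ℝ}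

theorem integrable_mul_comp_sub_of_memLp (hf : MemLp f p volume) (hg : MemLp g q volume)
    (x : ℝ) : Integrable (fun y => f y * g (x - y)) volume :=
  hf.integrable_mul (hg.comp_measurePreserving (Measure.measurePreserving_sub_left volume x))

theorem continuous_integral_comp_sub_mul_of_memLp (hp : p ≠ ∞) (hf : MemLp f p volume)
    (hg : MemLp g q volume) : Continuous fun x => ∫ y, f (x - y) * g y := by
  have : Fact (1 ≤ p) := ⟨HolderConjugate.one_le p q⟩
  have : Fact (1 ≤ q) := ⟨HolderConjugate.one_le q p⟩
  have hsub (x : ℝ) : MeasurePreserving (fun y => x - y) volume volume :=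
    Measure.measurePreserving_sub_left volume x
  let reflect : ℝ → C(ℝ, ℝ) := fun x => ⟨fun y => x - y, by fun_prop⟩
  let T : ℝ → Lp ℝ p volume := fun x => Lp.compMeasurePreserving (reflect x) (hsub x) (hf.toLp f)
  have hT : Continuous T := continuous_const.compMeasurePreservingLp
    (ContinuousMap.continuous_of_continuous_uncurry _ (continuous_fst.sub continuous_snd)) hsub hp
  have hpair (x : ℝ) : ∫ y, f (x - y) * g y
      = (ContinuousLinearMap.mul ℝ ℝ).lpPairing volume p q (T x) (hg.toLp g) := by
    rw [ContinuousLinearMap.lpPairing_eq_integral]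
    refine integral_congr_ae ?_
    filter_upwards [Lp.coeFn_compMeasurePreserving (hf.toLp f) (hsub x),
      (hsub x).quasiMeasurePreserving.ae_eq_comp hf.coeFn_toLp, hg.coeFn_toLp] with y h1 h2 h3
    have hTx : (T x : ℝ → ℝ) y = f (x - y) := h1.trans h2
    simp [hTx, h3]
  exact (((ContinuousLinearMap.mul ℝ ℝ).lpPairing volume p q).continuous₂.comp
    (hT.prodMk continuous_const)).congr fun x => (hpair x).symm

theorem continuous_convolution_of_memLp (hf : MemLp f p volume) (hg : MemLp g q volume) :
    Continuous fun x => ∫ y, f y * g (x - y) := by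
  rcases ne_or_eq p ∞ with hp | hp
  · have hsubst (x : ℝ) : ∫ y, f y * g (x - y) = ∫ y, f (x - y) * g y := by
      simpa using (integral_sub_left_eq_self (fun y => f y * g (x - y)) volume x).symm
    simp_rw [hsubst]
    exact continuous_integral_comp_sub_mul_of_memLp hp hf hg
  · have hq : q ≠ ∞ := by simp [(HolderConjugate.eq_top_iff_eq_one p q).1 hp]
    simp_rw [mul_comm (f _)]
    exact continuous_integral_comp_sub_mul_of_memLp hq hg hf

theorem integral_mul_intervalIntegral_comp_sub (hf : MemLp f p volume) (hg : MemLp g q volume)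
    (a b : ℝ) :
    ∫ y, f y * ∫ s in a..b, g (s - y) = ∫ s in a..b, ∫ y, f y * g (s - y) := by
  simp_rw [← intervalIntegral.integral_const_mul]
  refine (intervalIntegral_integral_swap ?_).symm
  have hmeas : AEStronglyMeasurable (Function.uncurry fun s y => f y * g (s - y))
      ((volume.restrict (Set.uIoc a b)).prod volume) :=
    hf.1.comp_snd.mul <| hg.1.comp_quasiMeasurePreserving <|
      (quasiMeasurePreserving_sub volume volume).mono_left
        (Measure.restrict_le_self.absolutelyContinuous.prod .rfl)
  rw [integrable_prod_iff hmeas]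
  refine ⟨.of_forall (integrable_mul_comp_sub_of_memLp hf hg), ?_⟩
  simp only [Function.uncurry_apply_pair, norm_mul]
  exact (continuous_convolution_of_memLp hf.norm hg.norm).integrableOn_uIoc

theorem integral_mul_comp_sub_sub_eq_intervalIntegral {ψ ψ' : ℝ → ℝ} (hf : MemLp f p volume)
    (hψ : MemLp ψ q volume) (hψ' : MemLp ψ' q volume)
    (hFTC : ∀ a b : ℝ, ψ b - ψ a = ∫ y in a..b, ψ' y) (x₀ x : ℝ) :
    (∫ y, f y * ψ (x - y)) - ∫ y, f y * ψ (x₀ - y) = ∫ s in x₀..x, ∫ y, f y * ψ' (s - y) := by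
  rw [← integral_sub (integrable_mul_comp_sub_of_memLp hf hψ x)
    (integrable_mul_comp_sub_of_memLp hf hψ x₀), ← integral_mul_intervalIntegral_comp_sub hf hψ']
  congr with y
  rw [← mul_sub, intervalIntegral.integral_comp_sub_right, hFTC]

end

theorem deriv_convolution'_general (p q : ℝ≥0∞) (hpq : 1 / p + 1 / q = 1)
    (F : ℝ → ℝ) (hF : MemLp F p (volume : Measure ℝ))
    (ψ : ℝ → ℝ)
    (hAC : ∀ a b : ℝ, ψ b - ψ a = ∫ y in a..b, deriv ψ y)
    (hψq : MemLp ψ q (volume : Measure ℝ))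
    (hψ'q : MemLp (deriv ψ) q (volume : Measure ℝ)) :
    ∀ x : ℝ, HasDerivAt (fun x => ∫ y : ℝ, F y * ψ (x - y))
      (∫ y : ℝ, F y * deriv ψ (x - y)) x := by
  have : p.HolderConjugate q := holderConjugate_iff.2 (by simpa only [one_div] using hpq)
  intro x₀
  have hFTC := (continuous_convolution_of_memLp hF hψ'q).integral_hasStrictDerivAt x₀ x₀
  refine (hFTC.hasDerivAt.const_add (∫ y, F y * ψ (x₀ - y))).congr_of_eventuallyEq
    (.of_forall fun x => ?_)
  dsimp only
  rw [← integral_mul_comp_sub_sub_eq_intervalIntegral hF hψq hψ'q hAC x₀ x]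
  ring

/-- Differentiation of convolutions: if `F ∈ L^p`, `ψ` is differentiable and absolutely
continuous with `ψ ∈ L^q`, `ψ' ∈ L^q`, and `ψ'` bounded on each compact interval (`q`
conjugate to `p`), then `(F ∗ ψ)'(x) = F ∗ ψ'(x)` for every `x`. -/
theorem deriv_convolution' (p q : ℝ≥0∞) (hp : 1 ≤ p) (hpq : 1 / p + 1 / q = 1)
    (F : ℝ → ℝ) (hF : MemLp F p (volume : Measure ℝ))
    (ψ : ℝ → ℝ) (hψdiff : Differentiable ℝ ψ)
    (hAC : ∀ a b : ℝ, ψ b - ψ a = ∫ y in a..b, deriv ψ y)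
    (hψq : MemLp ψ q (volume : Measure ℝ))
    (hψ'q : MemLp (deriv ψ) q (volume : Measure ℝ))
    (hbdd : ∀ K : Set ℝ, IsCompact K → ∃ M : ℝ, ∀ x ∈ K, |deriv ψ x| ≤ M) :
    ∀ x : ℝ, HasDerivAt (fun x => ∫ y : ℝ, F y * ψ (x - y))
      (∫ y : ℝ, F y * deriv ψ (x - y)) x :=
  deriv_convolution'_general p q hpq F hF ψ hAC hψq hψ'q
end
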